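/- For every simple type A over base types B, if every base type is interpreted as an inhabited compatible relation with well-founded strict order, then the interpretation ⟦A⟧ (base types to their interpretations, arrow types to weakly monotone function spaces with pointwise orders) is inhabited and its strict order is well-founded. -/

import Mathlib

structure CompatRel where
  carrier : Type
  gt : carrier → carrier → Prop
  ge : carrier → carrier → Prop

structure isCompatRel (X : CompatRel) : Prop where
  ge_trans : ∀ {x y z : X.carrier}, X.ge x y → X.ge y z → X.ge x z
  ge_refl : ∀ x : X.carrier, X.ge x x
  compat : ∀ {x y : X.carrier}, X.gt x y → X.ge x y
  ge_gt : ∀ {x y z : X.carrier}, X.ge x y → X.gt y z → X.gt x z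
  gt_ge : ∀ {x y z : X.carrier}, X.gt x y → X.ge y z → X.gt x z

structure weakMonotoneMap (X Y : CompatRel) where
  f : X.carrier → Y.carrier
  mono : ∀ x y : X.carrier, X.ge x y → Y.ge (f x) (f y)

def funCompatRel (X Y : CompatRel) : CompatRel where
  carrier := weakMonotoneMap X Y
  gt f g := ∀ x : X.carrier, Y.gt (f.f x) (g.f x)
  ge f g := ∀ x : X.carrier, Y.ge (f.f x) (g.f x)

def prodCompatRel (X Y : CompatRel) : CompatRel where
  carrier := X.carrier × Y.carrier
  gt x y := X.gt x.1 y.1 ∧ Y.gt x.2 y.2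
  ge x y := X.ge x.1 y.1 ∧ Y.ge x.2 y.2

inductive isWf {X : Type} (R : X → X → Prop) : X → Prop
  | acc : ∀ {x : X}, (∀ y : X, R x y → isWf R y) → isWf R x

def Wf {X : Type} (R : X → X → Prop) : Prop := ∀ x : X, isWf R x

inductive Ty (B : Type) : Type
  | Base : B → Ty B
  | Fun : Ty B → Ty B → Ty B

def semTy' {B : Type} (semB : B → CompatRel) : Ty B → CompatRel
  | .Base b => semB b
  | .Fun A1 A2 => funCompatRel (semTy' semB A1) (semTy' semB A2)

/-!
A constant map is weakly monotone as soon as `≥` is reflexive, which it is at every type because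
the base relations are reflexive and the function-space `≥` is pointwise. A descending chain of
maps `f₀ > f₁ > ⋯` evaluated at any fixed argument `x₀` is a descending chain in the codomain,
so well-foundedness of the codomain transfers to the function space.
-/

theorem isWf.of_map {X Y : Type} {R : X → X → Prop} {S : Y → Y → Prop} (φ : X → Y)
    (hφ : ∀ a b, R a b → S (φ a) (φ b)) {x : X} (hx : isWf S (φ x)) : isWf R x := by
  generalize hy : φ x = y at hx
  induction hx generalizing x with
  | acc _ ih => exact .acc fun z hz => ih (φ z) (hy ▸ hφ x z hz) rfl

theorem Wf.of_map {X Y : Type} {R : X → X → Prop} {S : Y → Y → Prop} (φ : X → Y)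
    (hφ : ∀ a b, R a b → S (φ a) (φ b)) (hS : Wf S) : Wf R :=
  fun x => isWf.of_map φ hφ (hS (φ x))

def weakMonotoneMap.const (X : CompatRel) {Y : CompatRel} (hY : ∀ y, Y.ge y y) (y : Y.carrier) :
    weakMonotoneMap X Y :=
  ⟨fun _ => y, fun _ _ _ => hY y⟩

theorem funCompatRel_ge_refl (X : CompatRel) {Y : CompatRel} (hY : ∀ y, Y.ge y y)
    (f : (funCompatRel X Y).carrier) : (funCompatRel X Y).ge f f :=
  fun x => hY (f.f x)

theorem funCompatRel_nonempty (X : CompatRel) {Y : CompatRel} (hY : ∀ y, Y.ge y y)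
    [Nonempty Y.carrier] : Nonempty (funCompatRel X Y).carrier :=
  ⟨weakMonotoneMap.const X hY (Classical.arbitrary _)⟩

theorem funCompatRel_wf {X Y : CompatRel} (x₀ : X.carrier) (hY : Wf Y.gt) :
    Wf (funCompatRel X Y).gt :=
  Wf.of_map (fun f : weakMonotoneMap X Y => f.f x₀) (fun _ _ h => h x₀) hY

theorem semTy'_ge_refl {B : Type} {semB : B → CompatRel} (hB : ∀ b x, (semB b).ge x x) :
    ∀ (A : Ty B) (x : (semTy' semB A).carrier), (semTy' semB A).ge x x
  | .Base b => hB b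
  | .Fun _ A₂ => funCompatRel_ge_refl _ (semTy'_ge_refl hB A₂)

theorem semTy_inhabited_and_wf {B : Type} (semB : B → CompatRel)
    (hcompat : ∀ b : B, isCompatRel (semB b))
    (hinhab : ∀ b : B, Nonempty (semB b).carrier)
    (hwf : ∀ b : B, Wf (semB b).gt)
    (A : Ty B) :
    Nonempty (semTy' semB A).carrier ∧ Wf (semTy' semB A).gt := by
  induction A with
  | Base b => exact ⟨hinhab b, hwf b⟩
  | Fun A₁ A₂ ih₁ ih₂ =>
    obtain ⟨⟨x₀⟩, -⟩ := ih₁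
    obtain ⟨hne₂, hwf₂⟩ := ih₂
    have hrefl₂ := semTy'_ge_refl (fun b => (hcompat b).ge_refl) A₂
    exact ⟨funCompatRel_nonempty _ hrefl₂, funCompatRel_wf x₀ hwf₂⟩
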